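/- Assume the subset LCM assumption (for every F ⊂ I and j ∈ F^c, E(x_j | X_F) = E(x_j X_Fᵀ)Σ_F^{-1}X_F a.s.) and assume that for each i = 1,…,q, the coordinates of β_i outside the active set A vanish (β_{i,j} = 0 for all j ∉ A). Then for any index set F with F^c ∩ A ≠ ∅, max_{j ∈ F^c∩A} { trace(M^SIR_{F∪{j}}) − trace(M^SIR_F) } ≥ λ_q · λ_max(Σ)^{-1} · λ_min(Σ)² · β_min², where λ_max(Σ) and λ_min(Σ) are the largest and smallest eigenvalues of Σ. -/

import Mathlib

open MeasureTheory ProbabilityTheory Matrix Filter Finset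
open scoped BigOperators ENNReal

noncomputable section

namespace TracePursuit

variable {Ω : Type*}

/-- Second-moment (= covariance, under mean zero) matrix of the coordinates of `X` in `F`. -/
def covM [MeasurableSpace Ω] (μ : Measure Ω) {p : ℕ} (X : Ω → Fin p → ℝ)
    (F : Finset (Fin p)) : Matrix F F ℝ :=
  Matrix.of fun i j => ∫ ω, X ω i.1 * X ω j.1 ∂μ

/-- Slice probability `p_h = P(Y ∈ J_h)`. -/
def sliceP [MeasurableSpace Ω] (μ : Measure Ω) {H : ℕ} (Y : Ω → ℝ)
    (J : Fin H → Set ℝ) (h : Fin H) : ℝ :=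
  (μ (Y ⁻¹' J h)).toReal

/-- Slice mean vector `U_{F,h} = E(X_F | Y ∈ J_h)`. -/
def sliceU [MeasurableSpace Ω] (μ : Measure Ω) {p H : ℕ} (X : Ω → Fin p → ℝ)
    (Y : Ω → ℝ) (J : Fin H → Set ℝ) (F : Finset (Fin p)) (h : Fin H) : F → ℝ :=
  fun i => (∫ ω in Y ⁻¹' J h, X ω i.1 ∂μ) / sliceP μ Y J h

/-- Slice second-moment matrix `V_{F,h} = E(X_F X_Fᵀ | Y ∈ J_h)`. -/
def sliceV [MeasurableSpace Ω] (μ : Measure Ω) {p H : ℕ} (X : Ω → Fin p → ℝ)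
    (Y : Ω → ℝ) (J : Fin H → Set ℝ) (F : Finset (Fin p)) (h : Fin H) : Matrix F F ℝ :=
  Matrix.of fun i j => (∫ ω in Y ⁻¹' J h, X ω i.1 * X ω j.1 ∂μ) / sliceP μ Y J h

/-- The SIR kernel matrix `M^SIR_F = Σ_F^{-1/2} (Σ_h p_h U_{F,h} U_{F,h}ᵀ) Σ_F^{-1/2}`,
where `S` is the inverse square root `Σ_F^{-1/2}`. -/
def MSIR [MeasurableSpace Ω] (μ : Measure Ω) {p H : ℕ} (X : Ω → Fin p → ℝ)
    (Y : Ω → ℝ) (J : Fin H → Set ℝ) (F : Finset (Fin p)) (S : Matrix F F ℝ) :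
    Matrix F F ℝ :=
  S * (∑ h, sliceP μ Y J h • vecMulVec (sliceU μ X Y J F h) (sliceU μ X Y J F h)) * S

/-- The SAVE kernel matrix
`M^SAVE_F = Σ_h p_h (Σ_F^{-1/2}(Σ_F - V_{F,h} + U_{F,h}U_{F,h}ᵀ)Σ_F^{-1/2})²`. -/
def MSAVE [MeasurableSpace Ω] (μ : Measure Ω) {p H : ℕ} (X : Ω → Fin p → ℝ)
    (Y : Ω → ℝ) (J : Fin H → Set ℝ) (F : Finset (Fin p)) (S : Matrix F F ℝ) :
    Matrix F F ℝ :=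
  ∑ h, sliceP μ Y J h •
    (S * (covM μ X F - sliceV μ X Y J F h
        + vecMulVec (sliceU μ X Y J F h) (sliceU μ X Y J F h)) * S) ^ 2

/-- `κ_F = Σ_h p_h U_{F,h}ᵀ Σ_F⁻¹ U_{F,h}`. -/
def kappaF [MeasurableSpace Ω] (μ : Measure Ω) {p H : ℕ} (X : Ω → Fin p → ℝ)
    (Y : Ω → ℝ) (J : Fin H → Set ℝ) (F : Finset (Fin p)) : ℝ :=
  ∑ h, sliceP μ Y J h *
    (sliceU μ X Y J F h ⬝ᵥ (covM μ X F)⁻¹.mulVec (sliceU μ X Y J F h))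

/-- The directional-regression kernel matrix `M^DR_F`. -/
def MDR [MeasurableSpace Ω] (μ : Measure Ω) {p H : ℕ} (X : Ω → Fin p → ℝ)
    (Y : Ω → ℝ) (J : Fin H → Set ℝ) (F : Finset (Fin p)) (S : Matrix F F ℝ) :
    Matrix F F ℝ :=
  (2 : ℝ) • (∑ h, sliceP μ Y J h • (S * sliceV μ X Y J F h * S) ^ 2)
  + (2 : ℝ) • (∑ h, sliceP μ Y J h •
      (S * vecMulVec (sliceU μ X Y J F h) (sliceU μ X Y J F h) * S)) ^ 2
  + (2 : ℝ) • (kappaF μ X Y J F •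
      (∑ h, sliceP μ Y J h •
        (S * vecMulVec (sliceU μ X Y J F h) (sliceU μ X Y J F h) * S)))
  - (2 : ℝ) • (1 : Matrix F F ℝ)

/-- The σ-algebra generated by `X_F`. -/
def mF [MeasurableSpace Ω] {p : ℕ} (X : Ω → Fin p → ℝ) (F : Finset (Fin p)) :
    MeasurableSpace Ω :=
  MeasurableSpace.comap (fun ω => fun i : F => X ω i.1) inferInstance

/-- `θ_{j|F} = Σ_F⁻¹ E(x_j X_F)`. -/
def thetaJF [MeasurableSpace Ω] (μ : Measure Ω) {p : ℕ} (X : Ω → Fin p → ℝ)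
    (F : Finset (Fin p)) (j : Fin p) : F → ℝ :=
  (covM μ X F)⁻¹.mulVec fun i => ∫ ω, X ω j * X ω i.1 ∂μ

/-- The subset linear conditional mean assumption:
for every `F ⊂ I` and `j ∈ Fᶜ`, `E(x_j | X_F) = E(x_j X_Fᵀ) Σ_F⁻¹ X_F` a.s. -/
def SubsetLCM [MeasurableSpace Ω] (μ : Measure Ω) {p : ℕ} (X : Ω → Fin p → ℝ) : Prop :=
  ∀ (F : Finset (Fin p)) (j : Fin p), j ∉ F →
    (μ[fun ω => X ω j | mF X F]) =ᵐ[μ] fun ω => ∑ i : F, thetaJF μ X F j i * X ω i.1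

/-- The subset constant conditional variance assumption:
for every `F ⊂ I` and `j ∈ Fᶜ`, `var(x_j | X_F)` is a.s. constant. -/
def SubsetCCV [MeasurableSpace Ω] (μ : Measure Ω) {p : ℕ} (X : Ω → Fin p → ℝ) : Prop :=
  ∀ (F : Finset (Fin p)) (j : Fin p), j ∉ F → ∃ c : ℝ,
    (fun ω => (μ[fun ω' => X ω' j ^ 2 | mF X F]) ω - ((μ[fun ω' => X ω' j | mF X F]) ω) ^ 2)
      =ᵐ[μ] fun _ => c

/-- The residual `x_{j|F} = x_j - E(x_j | X_F)`. -/
def xres [MeasurableSpace Ω] (μ : Measure Ω) {p : ℕ} (X : Ω → Fin p → ℝ)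
    (F : Finset (Fin p)) (j : Fin p) : Ω → ℝ :=
  fun ω => X ω j - (μ[fun ω' => X ω' j | mF X F]) ω

/-- Variance of a real function. -/
def varF [MeasurableSpace Ω] (μ : Measure Ω) (f : Ω → ℝ) : ℝ :=
  ∫ ω, f ω ^ 2 ∂μ - (∫ ω, f ω ∂μ) ^ 2

/-- `σ²_{j|F} = var(x_{j|F})`. -/
def sigma2 [MeasurableSpace Ω] (μ : Measure Ω) {p : ℕ} (X : Ω → Fin p → ℝ)
    (F : Finset (Fin p)) (j : Fin p) : ℝ :=
  varF μ (xres μ X F j)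

/-- `γ_{j|F} = x_{j|F}/σ_{j|F}`. -/
def gammaRes [MeasurableSpace Ω] (μ : Measure Ω) {p : ℕ} (X : Ω → Fin p → ℝ)
    (F : Finset (Fin p)) (j : Fin p) : Ω → ℝ :=
  fun ω => xres μ X F j ω / Real.sqrt (sigma2 μ X F j)

/-- `γ_{j|F,h} = E(γ_{j|F} | Y ∈ J_h)`. -/
def gammaH [MeasurableSpace Ω] (μ : Measure Ω) {p H : ℕ} (X : Ω → Fin p → ℝ)
    (Y : Ω → ℝ) (J : Fin H → Set ℝ) (F : Finset (Fin p)) (j : Fin p) (h : Fin H) : ℝ :=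
  (∫ ω in Y ⁻¹' J h, gammaRes μ X F j ω ∂μ) / sliceP μ Y J h

/-- `ζ_{j|F,h} = E(γ_{j|F}² | Y ∈ J_h)`. -/
def zetaH [MeasurableSpace Ω] (μ : Measure Ω) {p H : ℕ} (X : Ω → Fin p → ℝ)
    (Y : Ω → ℝ) (J : Fin H → Set ℝ) (F : Finset (Fin p)) (j : Fin p) (h : Fin H) : ℝ :=
  (∫ ω in Y ⁻¹' J h, gammaRes μ X F j ω ^ 2 ∂μ) / sliceP μ Y J h

/-- `E(X_F γ_{j|F} | Y ∈ J_h)`. -/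
def sliceXGamma [MeasurableSpace Ω] (μ : Measure Ω) {p H : ℕ} (X : Ω → Fin p → ℝ)
    (Y : Ω → ℝ) (J : Fin H → Set ℝ) (F : Finset (Fin p)) (j : Fin p) (h : Fin H) : F → ℝ :=
  fun i => (∫ ω in Y ⁻¹' J h, X ω i.1 * gammaRes μ X F j ω ∂μ) / sliceP μ Y J h

/-- `φ_{j|F,h} = Σ_F^{-1/2} (U_{F,h} γ_{j|F,h} - E(X_F γ_{j|F} | Y ∈ J_h))`. -/
def phiH [MeasurableSpace Ω] (μ : Measure Ω) {p H : ℕ} (X : Ω → Fin p → ℝ)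
    (Y : Ω → ℝ) (J : Fin H → Set ℝ) (F : Finset (Fin p)) (S : Matrix F F ℝ)
    (j : Fin p) (h : Fin H) : F → ℝ :=
  S.mulVec fun i => sliceU μ X Y J F h i * gammaH μ X Y J F j h
    - sliceXGamma μ X Y J F j h i

/-- `ν_{j|F,h} = Σ_F^{-1/2} E(X_F γ_{j|F} | Y ∈ J_h)`. -/
def nuH [MeasurableSpace Ω] (μ : Measure Ω) {p H : ℕ} (X : Ω → Fin p → ℝ)
    (Y : Ω → ℝ) (J : Fin H → Set ℝ) (F : Finset (Fin p)) (S : Matrix F F ℝ)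
    (j : Fin p) (h : Fin H) : F → ℝ :=
  S.mulVec (sliceXGamma μ X Y J F j h)

/-- `ι_{j|F,h} = Σ_F^{-1/2} U_{F,h} γ_{j|F,h}`. -/
def iotaH [MeasurableSpace Ω] (μ : Measure Ω) {p H : ℕ} (X : Ω → Fin p → ℝ)
    (Y : Ω → ℝ) (J : Fin H → Set ℝ) (F : Finset (Fin p)) (S : Matrix F F ℝ)
    (j : Fin p) (h : Fin H) : F → ℝ :=
  gammaH μ X Y J F j h • S.mulVec (sliceU μ X Y J F h)

/-- `ι_{j|F} = Σ_h p_h ι_{j|F,h}`. -/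
def iotaSum [MeasurableSpace Ω] (μ : Measure Ω) {p H : ℕ} (X : Ω → Fin p → ℝ)
    (Y : Ω → ℝ) (J : Fin H → Set ℝ) (F : Finset (Fin p)) (S : Matrix F F ℝ)
    (j : Fin p) : F → ℝ :=
  ∑ h, sliceP μ Y J h • iotaH μ X Y J F S j h

/-- `ϱ_{j|F} = Σ_h p_h γ_{j|F,h}²`. -/
def rhoJF [MeasurableSpace Ω] (μ : Measure Ω) {p H : ℕ} (X : Ω → Fin p → ℝ)
    (Y : Ω → ℝ) (J : Fin H → Set ℝ) (F : Finset (Fin p)) (j : Fin p) : ℝ :=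
  ∑ h, sliceP μ Y J h * gammaH μ X Y J F j h ^ 2

/-- `{J_h}` is a measurable partition of the sample space of `Y`. -/
def IsSlicePartition {H : ℕ} (J : Fin H → Set ℝ) : Prop :=
  (∀ h, MeasurableSet (J h)) ∧ Pairwise (Function.onFun Disjoint J) ∧ (⋃ h, J h) = Set.univ

/-- `S` is a symmetric inverse square root of `Sig`, i.e. `S = Σ'^{-1/2}`. -/
def IsInvSqrt {n : Type*} [Fintype n] [DecidableEq n] (S Sig : Matrix n n ℝ) : Prop :=
  S.IsSymm ∧ S * S = Sig⁻¹

end TracePursuit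

open TracePursuit

/-!
For `j ∉ F` let `b_j = e_j - θ_{j|F}`, so that `b_jᵀ X` is the residual of `x_j` after its linear
regression on `X_F`. Block inversion of `Σ_{F ∪ {j}}` turns the trace increment into
`(∑_h p_h (b_jᵀ U_h)²) / (b_jᵀ Σ b_j)`. Writing `Σ_h p_h U_h U_hᵀ = Σ^{1/2} M^SIR Σ^{1/2}`, the
numerator is `∑_i λ_i (β_iᵀ Σ b_j)² ≥ λ_q ∑_i (β_iᵀ Σ b_j)²`, and the denominator, a residual
variance, is at most `Σ_jj ≤ λ_max(Σ)`.

Since `Σ b_j` vanishes on `F` and each `β_i` vanishes off `A`, only the coordinates in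
`G = Fᶜ ∩ A` enter `β_iᵀ Σ b_j`, and there `((Σ b_j)_k)_{j,k ∈ G}` is the Gram matrix of the `b_j`
for the inner product `Σ`; as `b_j` restricted to `G` is the unit vector `e_j`, this Gram matrix
is bounded below by `λ_min(Σ)`. By Cauchy–Schwarz, `∑_{j ∈ G} ∑_i (β_iᵀ Σ b_j)²` is then at least
`λ_min(Σ)² ∑_{k ∈ G} ∑_i β_{i,k}² ≥ |G| λ_min(Σ)² β_min²`, and some `j ∈ G` reaches the average.
-/

namespace TracePursuit

lemma isUnit_det_submatrix_of_posDef {ι : Type*} [DecidableEq ι] {C : Matrix ι ι ℝ}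
    (hC : C.PosDef) (G : Finset ι) : IsUnit (C.submatrix ((↑) : G → ι) (↑)).det :=
  (isUnit_iff_isUnit_det _).mp (hC.submatrix Subtype.val_injective).isUnit

section LinearAlgebra

variable {ι : Type*} [Fintype ι]

lemma pos_of_dotProduct_mulVec_eq_mul {M : Matrix ι ι ℝ} (hM : M.PosDef) {v : ι → ℝ}
    (hv : v ≠ 0) {c : ℝ} (h : v ⬝ᵥ M *ᵥ v = c * (v ⬝ᵥ v)) : 0 < c := by
  have hvv : 0 < v ⬝ᵥ v :=
    lt_of_le_of_ne (Finset.sum_nonneg fun i _ => mul_self_nonneg (v i))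
      (Ne.symm (dotProduct_self_eq_zero.not.mpr hv))
  have hvMv : 0 < v ⬝ᵥ M *ᵥ v := by simpa using hM.dotProduct_mulVec_pos hv
  exact (mul_pos_iff_of_pos_right hvv).mp (h ▸ hvMv)

lemma sum_coe_sort_eq_sum_of_eq_zero {G : Finset ι} {f : ι → ℝ} (hf : ∀ i ∉ G, f i = 0) :
    ∑ i : G, f i = ∑ i, f i := by
  rw [Finset.sum_coe_sort]
  exact Finset.sum_subset (Finset.subset_univ G) fun i _ hi => hf i hi

lemma dotProduct_eq_zero_of_disjoint_support {G : Finset ι} {x y : ι → ℝ}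
    (hx : ∀ i ∉ G, x i = 0) (hy : ∀ i ∈ G, y i = 0) : x ⬝ᵥ y = 0 :=
  Finset.sum_eq_zero fun i _ => by
    by_cases hi : i ∈ G
    · rw [hy i hi, mul_zero]
    · rw [hx i hi, zero_mul]

lemma dotProduct_mulVec_comm_of_isSymm {C : Matrix ι ι ℝ} (hC : C.IsSymm) (x y : ι → ℝ) :
    x ⬝ᵥ C *ᵥ y = y ⬝ᵥ C *ᵥ x := by
  rw [dotProduct_mulVec, ← mulVec_transpose, hC.eq, dotProduct_comm]

variable [DecidableEq ι]

def invQuadOn (C : Matrix ι ι ℝ) (G : Finset ι) (u : ι → ℝ) : ℝ :=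
  (fun i : G => u i) ⬝ᵥ (C.submatrix ((↑) : G → ι) (↑))⁻¹ *ᵥ fun i : G => u i

variable {C : Matrix ι ι ℝ}

lemma exists_mulVec_eq_on {G : Finset ι} (hG : IsUnit (C.submatrix ((↑) : G → ι) (↑)).det)
    (u : ι → ℝ) : ∃ x : ι → ℝ, (∀ i ∉ G, x i = 0) ∧ ∀ i ∈ G, (C *ᵥ x) i = u i := by
  set v := (C.submatrix ((↑) : G → ι) (↑))⁻¹ *ᵥ fun i : G => u i
  have hv : C.submatrix ((↑) : G → ι) (↑) *ᵥ v = fun i : G => u i := by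
    rw [mulVec_mulVec, mul_nonsing_inv _ hG, one_mulVec]
  refine ⟨fun k => if h : k ∈ G then v ⟨k, h⟩ else 0, fun i hi => dif_neg hi, fun i hi => ?_⟩
  rw [← congrFun hv ⟨i, hi⟩, mulVec, dotProduct, mulVec, dotProduct,
    ← sum_coe_sort_eq_sum_of_eq_zero fun k hk => by rw [dif_neg hk, mul_zero]]
  simp

lemma invQuadOn_eq_dotProduct {G : Finset ι} (hG : IsUnit (C.submatrix ((↑) : G → ι) (↑)).det)
    {u x : ι → ℝ} (hx : ∀ i ∉ G, x i = 0) (hCx : ∀ i ∈ G, (C *ᵥ x) i = u i) :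
    invQuadOn C G u = x ⬝ᵥ u := by
  have hsol : C.submatrix (↑) (↑) *ᵥ (fun i : G => x i) = fun i : G => u i := by
    funext i
    rw [← hCx i i.2]
    exact sum_coe_sort_eq_sum_of_eq_zero (f := fun k => C i k * x k) fun k hk => by
      rw [hx k hk, mul_zero]
  rw [invQuadOn, ← hsol, mulVec_mulVec, nonsing_inv_mul _ hG, one_mulVec, hsol, dotProduct_comm]
  exact sum_coe_sort_eq_sum_of_eq_zero (f := fun k => x k * u k) fun k hk => by
    rw [hx k hk, zero_mul]

/-- `b = e_j - θ_{j|F}` (extended by zero): when `C` is the covariance matrix, `b ⬝ᵥ X` is the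
residual of `x_j` after its linear regression on `X_F`. -/
def IsRegressionResidual (C : Matrix ι ι ℝ) (F : Finset ι) (j : ι) (b : ι → ℝ) : Prop :=
  (∀ i ∉ F, b i = (Pi.single j 1 : ι → ℝ) i) ∧ ∀ i ∈ F, (C *ᵥ b) i = 0

namespace IsRegressionResidual

variable {F : Finset ι} {j : ι} {b : ι → ℝ}

lemma exists_of_isUnit_det (hF : IsUnit (C.submatrix ((↑) : F → ι) (↑)).det) (j : ι) :
    ∃ b, IsRegressionResidual C F j b := by
  obtain ⟨x, hx, hCx⟩ := exists_mulVec_eq_on hF (C.col j)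
  refine ⟨Pi.single j 1 - x, fun i hi => by simp [hx i hi], fun i hi => ?_⟩
  rw [mulVec_sub, mulVec_single_one, Pi.sub_apply, hCx i hi, sub_self]

lemma apply_self (hb : IsRegressionResidual C F j b) (hj : j ∉ F) : b j = 1 := by
  rw [hb.1 j hj, Pi.single_eq_same]

lemma apply_of_notMem_insert (hb : IsRegressionResidual C F j b) {i : ι}
    (hi : i ∉ insert j F) : b i = 0 := by
  rw [Finset.mem_insert, not_or] at hi
  rw [hb.1 i hi.2, Pi.single_eq_of_ne hi.1]

lemma dotProduct_eq (hb : IsRegressionResidual C F j b) {y : ι → ℝ} (hy : ∀ i ∈ F, y i = 0) :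
    b ⬝ᵥ y = y j :=
  calc b ⬝ᵥ y = Pi.single j 1 ⬝ᵥ y := Finset.sum_congr rfl fun i _ => by
        by_cases hi : i ∈ F
        · rw [hy i hi, mul_zero, mul_zero]
        · rw [hb.1 i hi]
    _ = y j := single_one_dotProduct j y

lemma dotProduct_mulVec_le (hC : C.PosSemidef) (hb : IsRegressionResidual C F j b) :
    b ⬝ᵥ C *ᵥ b ≤ Pi.single j 1 ⬝ᵥ C *ᵥ Pi.single j 1 := by
  have hsymm : C.IsSymm := isHermitian_iff_isSymm.mp hC.1
  set x := Pi.single j 1 - b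
  have hx : ∀ i ∉ F, x i = 0 := fun i hi => by simp [x, hb.1 i hi]
  have hxb : x ⬝ᵥ C *ᵥ b = 0 := dotProduct_eq_zero_of_disjoint_support hx hb.2
  have hxx : 0 ≤ x ⬝ᵥ C *ᵥ x := by simpa using hC.dotProduct_mulVec_nonneg x
  have hsplit : Pi.single j 1 = b + x := by simp [x]
  rw [hsplit, mulVec_add, dotProduct_add, add_dotProduct, add_dotProduct,
    dotProduct_mulVec_comm_of_isSymm hsymm b x, hxb]
  linarith

lemma dotProduct_mulVec_pos (hC : C.PosDef) (hb : IsRegressionResidual C F j b) (hj : j ∉ F) :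
    0 < b ⬝ᵥ C *ᵥ b := by
  have hb0 : b ≠ 0 := fun h => by simpa [h] using hb.apply_self hj
  simpa using hC.dotProduct_mulVec_pos hb0

end IsRegressionResidual

/-- Block inversion of `C` on `insert j F`: `b ⬝ᵥ C *ᵥ b` is the Schur complement of `C_F`. -/
theorem invQuadOn_insert (hC : C.PosDef) {F : Finset ι} {j : ι} (hj : j ∉ F) {b : ι → ℝ}
    (hb : IsRegressionResidual C F j b) (u : ι → ℝ) :
    invQuadOn C (insert j F) u = invQuadOn C F u + (b ⬝ᵥ u) ^ 2 / (b ⬝ᵥ C *ᵥ b) := by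
  have hunit := isUnit_det_submatrix_of_posDef hC
  have hsymm : C.IsSymm := isHermitian_iff_isSymm.mp hC.1
  obtain ⟨x, hx, hCx⟩ := exists_mulVec_eq_on (hunit F) u
  set s := b ⬝ᵥ C *ᵥ b
  have hCb : (C *ᵥ b) j = s := (hb.dotProduct_eq hb.2).symm
  have hs : s ≠ 0 := (hb.dotProduct_mulVec_pos hC hj).ne'
  -- `(C x)_j` is read off from `b ⬝ᵥ C x = 0`
  have hCx_j : (C *ᵥ x) j = u j - b ⬝ᵥ u := by
    have h0 : b ⬝ᵥ C *ᵥ x = 0 := by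
      rw [dotProduct_mulVec_comm_of_isSymm hsymm, dotProduct_eq_zero_of_disjoint_support hx hb.2]
    have h1 := hb.dotProduct_eq (y := u - C *ᵥ x) fun i hi => by simp [hCx i hi]
    rw [dotProduct_sub, h0, Pi.sub_apply] at h1
    linarith
  rw [invQuadOn_eq_dotProduct (hunit F) hx hCx,
    invQuadOn_eq_dotProduct (hunit _) (x := x + (b ⬝ᵥ u / s) • b)]
  · rw [add_dotProduct, smul_dotProduct, smul_eq_mul]
    ring
  · intro i hi
    rw [Pi.add_apply, hx i fun h => hi (Finset.mem_insert_of_mem h),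
      Pi.smul_apply, hb.apply_of_notMem_insert hi, smul_zero, add_zero]
  · intro i hi
    rw [mulVec_add, mulVec_smul, Pi.add_apply, Pi.smul_apply, smul_eq_mul]
    rcases Finset.mem_insert.mp hi with rfl | hiF
    · rw [hCx_j, hCb]
      field_simp
      ring
    · rw [hCx i hiF, hb.2 i hiF, mul_zero, add_zero]

lemma sq_mul_sum_sq_le_sum_sq_of_mul_sum_sq_le {κ : Type*} (G : Finset κ) (D : κ → κ → ℝ)
    (w : κ → ℝ) {c : ℝ} (hc : 0 ≤ c)
    (h : c * ∑ k ∈ G, w k ^ 2 ≤ ∑ j ∈ G, w j * ∑ k ∈ G, w k * D j k) :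
    c ^ 2 * ∑ k ∈ G, w k ^ 2 ≤ ∑ j ∈ G, (∑ k ∈ G, w k * D j k) ^ 2 := by
  set Q := ∑ k ∈ G, w k ^ 2
  have hCS := Finset.sum_mul_sq_le_sq_mul_sq G w fun j => ∑ k ∈ G, w k * D j k
  have hQ : 0 ≤ Q := Finset.sum_nonneg fun k _ => sq_nonneg (w k)
  rcases hQ.eq_or_lt with hQ0 | hQpos
  · rw [← hQ0, mul_zero]
    exact Finset.sum_nonneg fun j _ => sq_nonneg _
  · have hsq := pow_le_pow_left₀ (mul_nonneg hc hQ) h 2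
    refine le_of_mul_le_mul_right ?_ hQpos
    nlinarith

lemma mul_sum_sq_le_sum_mul_sum_mulVec {lamMin : ℝ}
    (hmin : ∀ v, lamMin * (v ⬝ᵥ v) ≤ v ⬝ᵥ C *ᵥ v) (hlam : 0 ≤ lamMin) {F G : Finset ι}
    (hGF : Disjoint G F) {b : ι → ι → ℝ} (hb : ∀ k ∈ G, IsRegressionResidual C F k (b k))
    (w : ι → ℝ) :
    lamMin * ∑ k ∈ G, w k ^ 2 ≤ ∑ j ∈ G, w j * ∑ k ∈ G, w k * (C *ᵥ b j) k := by
  set z := ∑ k ∈ G, w k • b k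
  have hz : ∀ l ∈ G, z l = w l := fun l hl => by
    have hlF := Finset.disjoint_left.mp hGF hl
    rw [show z l = ∑ k ∈ G, w k * b k l by simp [z], Finset.sum_eq_single_of_mem l hl]
    · simp [(hb l hl).apply_self hlF]
    · intro k hk hkl
      simp [(hb k hk).1 l hlF, Pi.single_eq_of_ne (Ne.symm hkl)]
  have hzz : ∑ k ∈ G, w k ^ 2 ≤ z ⬝ᵥ z :=
    calc ∑ k ∈ G, w k ^ 2 = ∑ k ∈ G, z k * z k :=
          Finset.sum_congr rfl fun k hk => by rw [hz k hk, sq]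
      _ ≤ z ⬝ᵥ z := Finset.sum_le_sum_of_subset_of_nonneg (Finset.subset_univ G)
          fun k _ _ => mul_self_nonneg _
  have hzCz : z ⬝ᵥ C *ᵥ z = ∑ j ∈ G, w j * ∑ k ∈ G, w k * (C *ᵥ b j) k := by
    simp only [z, mulVec_sum, mulVec_smul, sum_dotProduct, smul_dotProduct, dotProduct_sum,
      dotProduct_smul, smul_eq_mul]
    refine Finset.sum_congr rfl fun j hj => congrArg (w j * ·) <|
      Finset.sum_congr rfl fun k hk => by rw [(hb k hk).dotProduct_eq (hb j hj).2]
  calc lamMin * ∑ k ∈ G, w k ^ 2 ≤ lamMin * (z ⬝ᵥ z) := mul_le_mul_of_nonneg_left hzz hlam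
    _ ≤ _ := hzCz ▸ hmin z

lemma sq_inf'_sqrt_le {α : Type*} {A : Finset α} (hA : A.Nonempty) {f : α → ℝ}
    (hf : ∀ k, 0 ≤ f k) {k : α} (hk : k ∈ A) : (A.inf' hA fun j => √(f j)) ^ 2 ≤ f k := by
  have h0 : 0 ≤ A.inf' hA fun j => √(f j) := Finset.le_inf' hA _ fun j _ => Real.sqrt_nonneg _
  calc _ ≤ √(f k) ^ 2 := pow_le_pow_left₀ h0 (Finset.inf'_le _ hk) 2
    _ = f k := Real.sq_sqrt (hf k)

lemma exists_mem_sq_mul_sq_le_sum_sq {κ : Type*} [Fintype κ] {lamMin : ℝ}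
    (hmin : ∀ v, lamMin * (v ⬝ᵥ v) ≤ v ⬝ᵥ C *ᵥ v) (hlam : 0 ≤ lamMin)
    {A F : Finset ι} (hA : A.Nonempty) (hFA : (Fᶜ ∩ A).Nonempty) {b : ι → ι → ℝ}
    (hb : ∀ j, IsRegressionResidual C F j (b j)) {β : κ → ι → ℝ}
    (hβA : ∀ i, ∀ k ∉ A, β i k = 0) :
    ∃ j ∈ Fᶜ ∩ A, lamMin ^ 2 * (A.inf' hA fun k => √(∑ i, β i k ^ 2)) ^ 2
      ≤ ∑ i, (β i ⬝ᵥ C *ᵥ b j) ^ 2 := by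
  set G := Fᶜ ∩ A
  have hGF : Disjoint G F := Finset.disjoint_left.mpr fun k hk =>
    Finset.mem_compl.mp (Finset.mem_inter.mp hk).1
  have hdot (i : κ) (j : ι) : β i ⬝ᵥ C *ᵥ b j = ∑ k ∈ G, β i k * (C *ᵥ b j) k := by
    refine (Finset.sum_subset (Finset.subset_univ G) fun k _ hk => ?_).symm
    by_cases hkF : k ∈ F
    · rw [(hb j).2 k hkF, mul_zero]
    · rw [hβA i k fun hkA => hk (Finset.mem_inter.mpr ⟨Finset.mem_compl.mpr hkF, hkA⟩),
        zero_mul]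
  refine Finset.exists_le_of_sum_le hFA ?_
  calc ∑ j ∈ G, lamMin ^ 2 * (A.inf' hA fun k => √(∑ i, β i k ^ 2)) ^ 2
      ≤ ∑ k ∈ G, lamMin ^ 2 * ∑ i, β i k ^ 2 := Finset.sum_le_sum fun k hk =>
        mul_le_mul_of_nonneg_left (sq_inf'_sqrt_le hA
          (fun k => Finset.sum_nonneg fun i _ => sq_nonneg _) (Finset.mem_inter.mp hk).2)
          (sq_nonneg _)
    _ = ∑ i, lamMin ^ 2 * ∑ k ∈ G, β i k ^ 2 := by
      simp only [← Finset.mul_sum]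
      rw [Finset.sum_comm]
    _ ≤ ∑ i, ∑ j ∈ G, (∑ k ∈ G, β i k * (C *ᵥ b j) k) ^ 2 := Finset.sum_le_sum fun i _ =>
        sq_mul_sum_sq_le_sum_sq_of_mul_sum_sq_le G _ _ hlam
          (mul_sum_sq_le_sum_mul_sum_mulVec hmin hlam hGF (fun k _ => hb k) (β i))
    _ = ∑ j ∈ G, ∑ i, (β i ⬝ᵥ C *ᵥ b j) ^ 2 := by
      simp only [hdot]
      exact Finset.sum_comm

end LinearAlgebra

section Spectral

variable {n κ : Type*} [Fintype n] [Fintype κ]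

lemma dotProduct_sum_smul_vecMulVec_mulVec (c : κ → ℝ) (u : κ → n → ℝ) (x : n → ℝ) :
    x ⬝ᵥ (∑ k, c k • vecMulVec (u k) (u k)) *ᵥ x = ∑ k, c k * (u k ⬝ᵥ x) ^ 2 := by
  rw [Matrix.sum_mulVec, dotProduct_sum]
  refine Finset.sum_congr rfl fun k _ => ?_
  rw [smul_mulVec, dotProduct_smul, dotProduct_mulVec, vecMul_vecMulVec, smul_dotProduct,
    dotProduct_comm x, smul_eq_mul, smul_eq_mul, sq]

lemma trace_mul_sum_smul_vecMulVec_mul (S : Matrix n n ℝ) (c : κ → ℝ) (u : κ → n → ℝ) :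
    (S * (∑ k, c k • vecMulVec (u k) (u k)) * S).trace
      = ∑ k, c k * (u k ⬝ᵥ (S * S) *ᵥ u k) := by
  rw [trace_mul_cycle, Matrix.mul_sum, trace_sum]
  refine Finset.sum_congr rfl fun k _ => ?_
  rw [Matrix.mul_smul, trace_smul, mul_vecMulVec, trace_vecMulVec, dotProduct_comm, smul_eq_mul]

lemma dotProduct_mulVec_eq_sum_of_mul_mul_eq [DecidableEq n] {C S K : Matrix n n ℝ}
    (hC : IsUnit C.det) (hS : IsInvSqrt S C) {lam : κ → ℝ} {η : κ → n → ℝ}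
    (hK : S * K * S = ∑ i, lam i • vecMulVec (η i) (η i)) (b : n → ℝ) :
    b ⬝ᵥ K *ᵥ b = ∑ i, lam i * ((S *ᵥ η i) ⬝ᵥ C *ᵥ b) ^ 2 := by
  have hSt (x y : n → ℝ) : x ⬝ᵥ S *ᵥ y = S *ᵥ x ⬝ᵥ y := by
    rw [dotProduct_mulVec, ← mulVec_transpose, hS.1.eq]
  set y := S *ᵥ C *ᵥ b
  have hy : S *ᵥ y = b := by
    rw [mulVec_mulVec, mulVec_mulVec, hS.2, nonsing_inv_mul _ hC, one_mulVec]
  calc b ⬝ᵥ K *ᵥ b = y ⬝ᵥ (S * K * S) *ᵥ y := by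
        rw [← mulVec_mulVec, ← mulVec_mulVec, hSt, hy]
    _ = ∑ i, lam i * ((S *ᵥ η i) ⬝ᵥ C *ᵥ b) ^ 2 := by
      rw [hK, dotProduct_sum_smul_vecMulVec_mulVec]
      exact Finset.sum_congr rfl fun i _ => by rw [hSt]

end Spectral

section Moments

variable {Ω : Type*} [MeasurableSpace Ω] (μ : Measure Ω) {p H : ℕ} (X : Ω → Fin p → ℝ)
  (Y : Ω → ℝ) (J : Fin H → Set ℝ)

def momentMatrix : Matrix (Fin p) (Fin p) ℝ :=
  Matrix.of fun a b => ∫ ω, X ω a * X ω b ∂μ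

def sliceMean (h : Fin H) : Fin p → ℝ :=
  fun k => (∫ ω in Y ⁻¹' J h, X ω k ∂μ) / sliceP μ Y J h

lemma covM_univ_eq_submatrix :
    covM μ X univ = (momentMatrix μ X).submatrix (Equiv.subtypeUnivEquiv mem_univ)
      (Equiv.subtypeUnivEquiv mem_univ) :=
  rfl

lemma comp_dotProduct_covM_univ_mulVec (v w : Fin p → ℝ) :
    v ∘ Equiv.subtypeUnivEquiv mem_univ ⬝ᵥ covM μ X univ *ᵥ (w ∘ Equiv.subtypeUnivEquiv mem_univ)
      = v ⬝ᵥ momentMatrix μ X *ᵥ w := by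
  rw [covM_univ_eq_submatrix, submatrix_mulVec_equiv]
  exact comp_equiv_dotProduct_comp_equiv v (momentMatrix μ X *ᵥ w) _

lemma forall_momentMatrix_of_forall_covM_univ {P : ℝ → ℝ → Prop}
    (h : ∀ v : univ → ℝ, P (v ⬝ᵥ covM μ X univ *ᵥ v) (v ⬝ᵥ v)) (v : Fin p → ℝ) :
    P (v ⬝ᵥ momentMatrix μ X *ᵥ v) (v ⬝ᵥ v) := by
  simpa only [comp_dotProduct_covM_univ_mulVec, comp_equiv_dotProduct_comp_equiv]
    using h (v ∘ Equiv.subtypeUnivEquiv mem_univ)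

lemma momentMatrix_posDef (hpos : (covM μ X univ).PosDef) : (momentMatrix μ X).PosDef := by
  simpa [covM_univ_eq_submatrix] using
    hpos.submatrix (Equiv.subtypeUnivEquiv (mem_univ (α := Fin p))).symm.injective

lemma trace_MSIR {F : Finset (Fin p)} {S : Matrix F F ℝ} (hS : S * S = (covM μ X F)⁻¹) :
    (MSIR μ X Y J F S).trace
      = ∑ h, sliceP μ Y J h * invQuadOn (momentMatrix μ X) F (sliceMean μ X Y J h) := by
  rw [MSIR, trace_mul_sum_smul_vecMulVec_mul, hS]
  rfl

lemma trace_MSIR_insert_sub (hC : (momentMatrix μ X).PosDef) {F : Finset (Fin p)} {j : Fin p}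
    (hj : j ∉ F) {b : Fin p → ℝ} (hb : IsRegressionResidual (momentMatrix μ X) F j b)
    {S : Matrix F F ℝ} {S' : Matrix ↥(insert j F) ↥(insert j F) ℝ}
    (hS : S * S = (covM μ X F)⁻¹) (hS' : S' * S' = (covM μ X (insert j F))⁻¹) :
    (MSIR μ X Y J (insert j F) S').trace - (MSIR μ X Y J F S).trace
      = (∑ h, sliceP μ Y J h * (b ⬝ᵥ sliceMean μ X Y J h) ^ 2)
          / (b ⬝ᵥ momentMatrix μ X *ᵥ b) := by
  rw [trace_MSIR μ X Y J hS', trace_MSIR μ X Y J hS, ← Finset.sum_sub_distrib, Finset.sum_div]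
  refine Finset.sum_congr rfl fun h _ => ?_
  rw [invQuadOn_insert hC hj hb]
  ring

lemma sum_sliceP_mul_sq_eq_sum_mul_sq (hpos : (covM μ X univ).PosDef) {S : Matrix univ univ ℝ}
    (hS : IsInvSqrt S (covM μ X univ)) {κ : Type*} [Fintype κ] {lam : κ → ℝ}
    {η : κ → univ → ℝ} (hspec : MSIR μ X Y J univ S = ∑ i, lam i • vecMulVec (η i) (η i))
    (b : Fin p → ℝ) :
    ∑ h, sliceP μ Y J h * (b ⬝ᵥ sliceMean μ X Y J h) ^ 2
      = ∑ i, lam i * ((fun k => (S *ᵥ η i) ⟨k, mem_univ k⟩) ⬝ᵥ momentMatrix μ X *ᵥ b) ^ 2 := by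
  set e := Equiv.subtypeUnivEquiv (mem_univ (α := Fin p))
  have key := dotProduct_mulVec_eq_sum_of_mul_mul_eq
    ((isUnit_iff_isUnit_det _).mp hpos.isUnit) hS hspec (b ∘ e)
  rw [dotProduct_sum_smul_vecMulVec_mulVec, covM_univ_eq_submatrix, submatrix_mulVec_equiv] at key
  convert key using 4 with h _ i
  · rw [dotProduct_comm]
    exact (comp_equiv_dotProduct_comp_equiv _ _ e).symm
  · exact comp_equiv_symm_dotProduct (S *ᵥ η i) (momentMatrix μ X *ᵥ b) e

lemma mul_sum_sq_le_trace_MSIR_insert_sub (hpos : (covM μ X univ).PosDef)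
    {invS : ∀ F : Finset (Fin p), Matrix F F ℝ} (hinvS : ∀ F, IsInvSqrt (invS F) (covM μ X F))
    {κ : Type*} [Fintype κ] {lam : κ → ℝ} {η : κ → univ → ℝ}
    (hspec : MSIR μ X Y J univ (invS univ) = ∑ i, lam i • vecMulVec (η i) (η i))
    {c : ℝ} (hc : 0 ≤ c) (hc_le : ∀ i, c ≤ lam i) {lamMax : ℝ}
    (hmax : ∀ v, v ⬝ᵥ momentMatrix μ X *ᵥ v ≤ lamMax * (v ⬝ᵥ v))
    {F : Finset (Fin p)} {j : Fin p} (hj : j ∉ F) {b : Fin p → ℝ}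
    (hb : IsRegressionResidual (momentMatrix μ X) F j b) :
    c * lamMax⁻¹ * ∑ i, ((fun k => (invS univ *ᵥ η i) ⟨k, mem_univ k⟩)
        ⬝ᵥ momentMatrix μ X *ᵥ b) ^ 2
      ≤ (MSIR μ X Y J (insert j F) (invS (insert j F))).trace
          - (MSIR μ X Y J F (invS F)).trace := by
  have hC := momentMatrix_posDef μ X hpos
  have hs_le : b ⬝ᵥ momentMatrix μ X *ᵥ b ≤ lamMax :=
    (hb.dotProduct_mulVec_le hC.posSemidef).trans (by simpa using hmax (Pi.single j 1))
  rw [trace_MSIR_insert_sub μ X Y J hC hj hb (hinvS F).2 (hinvS _).2,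
    sum_sliceP_mul_sq_eq_sum_mul_sq μ X Y J hpos (hinvS univ) hspec, mul_right_comm,
    ← div_eq_mul_inv]
  set x := fun i => (fun k => (invS univ *ᵥ η i) ⟨k, mem_univ k⟩) ⬝ᵥ momentMatrix μ X *ᵥ b
  have hsum : c * ∑ i, x i ^ 2 ≤ ∑ i, lam i * x i ^ 2 := by
    rw [Finset.mul_sum]
    exact Finset.sum_le_sum fun i _ => mul_le_mul_of_nonneg_right (hc_le i) (sq_nonneg _)
  exact div_le_div₀ ((mul_nonneg hc (Finset.sum_nonneg fun i _ => sq_nonneg _)).trans hsum)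
    hsum (hb.dotProduct_mulVec_pos hC hj) hs_le

end Moments

end TracePursuit

theorem sir_max_trace_change_general {Ω : Type*} [m0 : MeasurableSpace Ω]
    (μ : Measure Ω)
    {p H q : ℕ} (hq : 0 < q) (X : Ω → Fin p → ℝ) (Y : Ω → ℝ)
    (hpos : (covM μ X Finset.univ).PosDef)
    (J : Fin H → Set ℝ)
    (invS : ∀ F : Finset (Fin p), Matrix F F ℝ)
    (hinvS : ∀ F, IsInvSqrt (invS F) (covM μ X F))
    -- spectral decomposition of `M^SIR` with positive, decreasing eigenvalues:
    (lam : Fin q → ℝ) (hlam_pos : ∀ i, 0 < lam i) (hlam_mono : Antitone lam)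
    (η : Fin q → (↥(Finset.univ : Finset (Fin p)) → ℝ))
    (hspec : MSIR μ X Y J Finset.univ (invS Finset.univ)
      = ∑ i, lam i • vecMulVec (η i) (η i))
    -- extreme eigenvalues of `Σ`:
    (lamMax lamMin : ℝ)
    (hmax : (∀ v : (↥(Finset.univ : Finset (Fin p)) → ℝ),
        v ⬝ᵥ (covM μ X Finset.univ).mulVec v ≤ lamMax * (v ⬝ᵥ v)) ∧
      ∃ v : (↥(Finset.univ : Finset (Fin p)) → ℝ), v ≠ 0 ∧
        v ⬝ᵥ (covM μ X Finset.univ).mulVec v = lamMax * (v ⬝ᵥ v))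
    (hmin : (∀ v : (↥(Finset.univ : Finset (Fin p)) → ℝ),
        lamMin * (v ⬝ᵥ v) ≤ v ⬝ᵥ (covM μ X Finset.univ).mulVec v) ∧
      ∃ v : (↥(Finset.univ : Finset (Fin p)) → ℝ), v ≠ 0 ∧
        v ⬝ᵥ (covM μ X Finset.univ).mulVec v = lamMin * (v ⬝ᵥ v))
    -- `β_i = Σ^{-1/2} η_i` vanishes outside the active set `A`:
    (A : Finset (Fin p)) (hAne : A.Nonempty)
    (hβA : ∀ (i : Fin q) (j : Fin p), j ∉ A →
      (invS Finset.univ).mulVec (η i) ⟨j, Finset.mem_univ j⟩ = 0)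
    (F : Finset (Fin p)) (hFA : ((Fᶜ : Finset (Fin p)) ∩ A).Nonempty) :
    lam ⟨q - 1, Nat.sub_lt hq one_pos⟩ * lamMax⁻¹ * lamMin ^ 2 *
        (A.inf' hAne fun j => Real.sqrt (∑ i,
          ((invS Finset.univ).mulVec (η i) ⟨j, Finset.mem_univ j⟩) ^ 2)) ^ 2
      ≤ (Fᶜ ∩ A).sup' hFA fun j =>
          (MSIR μ X Y J (insert j F) (invS (insert j F))).trace
            - (MSIR μ X Y J F (invS F)).trace := by
  have hC := momentMatrix_posDef μ X hpos
  have hmax' := forall_momentMatrix_of_forall_covM_univ μ X (P := fun a b => a ≤ lamMax * b) hmax.1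
  have hmin' := forall_momentMatrix_of_forall_covM_univ μ X (P := fun a b => lamMin * b ≤ a) hmin.1
  have hlamMax : 0 < lamMax :=
    let ⟨_, hv, hveq⟩ := hmax.2; pos_of_dotProduct_mulVec_eq_mul hpos hv hveq
  have hlamMin : 0 < lamMin :=
    let ⟨_, hv, hveq⟩ := hmin.2; pos_of_dotProduct_mulVec_eq_mul hpos hv hveq
  choose b hb using
    IsRegressionResidual.exists_of_isUnit_det (isUnit_det_submatrix_of_posDef hC F)
  obtain ⟨j, hjG, hj⟩ := exists_mem_sq_mul_sq_le_sum_sq hmin' hlamMin.le hAne hFA hb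
    (β := fun i k => (invS univ *ᵥ η i) ⟨k, mem_univ k⟩) hβA
  have hlast : ∀ i, lam ⟨q - 1, Nat.sub_lt hq one_pos⟩ ≤ lam i := fun i =>
    hlam_mono (Nat.le_sub_one_of_lt i.2)
  calc _ = lam ⟨q - 1, Nat.sub_lt hq one_pos⟩ * lamMax⁻¹ * (lamMin ^ 2 *
        (A.inf' hAne fun k => √(∑ i, ((invS univ).mulVec (η i) ⟨k, mem_univ k⟩) ^ 2)) ^ 2) := by
        ring
    _ ≤ _ := mul_le_mul_of_nonneg_left hj (mul_nonneg (hlam_pos _).le (inv_nonneg.mpr hlamMax.le))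
    _ ≤ _ := mul_sum_sq_le_trace_MSIR_insert_sub μ X Y J hpos hinvS hspec (hlam_pos _).le hlast
        hmax' (Finset.mem_compl.mp (Finset.mem_inter.mp hjG).1) (hb j)
    _ ≤ _ := Finset.le_sup' (fun j => (MSIR μ X Y J (insert j F) (invS (insert j F))).trace
        - (MSIR μ X Y J F (invS F)).trace) hjG

/-- **Proposition 2.** Assume the subset LCM assumption, let
`M^SIR = Σ_{i=1}^q λ_i η_i η_iᵀ` be the spectral decomposition of the SIR kernel matrix with
`λ_1 ≥ … ≥ λ_q > 0` and orthonormal `η_i`, set `β_i = Σ^{-1/2} η_i`, and assume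
`β_{i,j} = 0` for all `j ∉ A` where `A` is the active set.  Then for any index set `F` with
`Fᶜ ∩ A ≠ ∅`,
`max_{j ∈ Fᶜ∩A} (trace(M^SIR_{F∪{j}}) - trace(M^SIR_F)) ≥ λ_q λ_max(Σ)⁻¹ λ_min(Σ)² β_min²`. -/
theorem sir_max_trace_change {Ω : Type*} [m0 : MeasurableSpace Ω]
    (μ : Measure Ω) [IsProbabilityMeasure μ]
    {p H q : ℕ} (hq : 0 < q) (X : Ω → Fin p → ℝ) (Y : Ω → ℝ)
    (hX : Measurable X) (hY : Measurable Y)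
    (hmom : ∀ i, MemLp (fun ω => X ω i) 4 μ)
    (hmean : ∀ i, ∫ ω, X ω i ∂μ = 0)
    (hpos : (covM μ X Finset.univ).PosDef)
    (J : Fin H → Set ℝ) (hJ : IsSlicePartition J)
    (hph : ∀ h, 0 < sliceP μ Y J h)
    (invS : ∀ F : Finset (Fin p), Matrix F F ℝ)
    (hinvS : ∀ F, IsInvSqrt (invS F) (covM μ X F))
    (hLCM : SubsetLCM μ X)
    -- spectral decomposition of `M^SIR` with positive, decreasing eigenvalues:
    (lam : Fin q → ℝ) (hlam_pos : ∀ i, 0 < lam i) (hlam_mono : Antitone lam)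
    (η : Fin q → (↥(Finset.univ : Finset (Fin p)) → ℝ))
    (hη : ∀ i k : Fin q, η i ⬝ᵥ η k = if i = k then (1 : ℝ) else 0)
    (hspec : MSIR μ X Y J Finset.univ (invS Finset.univ)
      = ∑ i, lam i • vecMulVec (η i) (η i))
    -- extreme eigenvalues of `Σ`:
    (lamMax lamMin : ℝ)
    (hmax : (∀ v : (↥(Finset.univ : Finset (Fin p)) → ℝ),
        v ⬝ᵥ (covM μ X Finset.univ).mulVec v ≤ lamMax * (v ⬝ᵥ v)) ∧
      ∃ v : (↥(Finset.univ : Finset (Fin p)) → ℝ), v ≠ 0 ∧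
        v ⬝ᵥ (covM μ X Finset.univ).mulVec v = lamMax * (v ⬝ᵥ v))
    (hmin : (∀ v : (↥(Finset.univ : Finset (Fin p)) → ℝ),
        lamMin * (v ⬝ᵥ v) ≤ v ⬝ᵥ (covM μ X Finset.univ).mulVec v) ∧
      ∃ v : (↥(Finset.univ : Finset (Fin p)) → ℝ), v ≠ 0 ∧
        v ⬝ᵥ (covM μ X Finset.univ).mulVec v = lamMin * (v ⬝ᵥ v))
    -- `β_i = Σ^{-1/2} η_i` vanishes outside the active set `A`:
    (A : Finset (Fin p)) (hAne : A.Nonempty)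
    (hβA : ∀ (i : Fin q) (j : Fin p), j ∉ A →
      (invS Finset.univ).mulVec (η i) ⟨j, Finset.mem_univ j⟩ = 0)
    (F : Finset (Fin p)) (hFA : ((Fᶜ : Finset (Fin p)) ∩ A).Nonempty) :
    lam ⟨q - 1, Nat.sub_lt hq one_pos⟩ * lamMax⁻¹ * lamMin ^ 2 *
        (A.inf' hAne fun j => Real.sqrt (∑ i,
          ((invS Finset.univ).mulVec (η i) ⟨j, Finset.mem_univ j⟩) ^ 2)) ^ 2
      ≤ (Fᶜ ∩ A).sup' hFA fun j =>
          (MSIR μ X Y J (insert j F) (invS (insert j F))).trace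
            - (MSIR μ X Y J F (invS F)).trace :=
  sir_max_trace_change_general (m0 := m0) μ hq X Y hpos J invS hinvS lam hlam_pos hlam_mono η hspec
    lamMax lamMin hmax hmin A hAne hβA F hFA
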